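/- Let S ⊆ ℤ^m be a vector semigroup and O = rint(cone(S)). If 0 ∈ O then S is a group, i.e., −x ∈ S for all x ∈ S. -/

import Mathlib

open Set Filter Topology MeasureTheory ProbabilityTheory Pointwise

noncomputable section

def zc {m : ℕ} (x : Fin m → ℤ) : Fin m → ℝ := fun i => (x i : ℝ)

def coneHull {m : ℕ} (A : Set (Fin m → ℝ)) : Set (Fin m → ℝ) :=
  { x | ∃ (s : Finset (Fin m → ℝ)) (w : (Fin m → ℝ) → ℝ),
      ↑s ⊆ A ∧ (∀ a ∈ s, 0 ≤ w a) ∧ x = ∑ a ∈ s, w a • a }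

/-!
As `0` is a relative interior point of `C = cone(S)`, the cone `C` contains `-a` along with each
`a ∈ C`. For `x ∈ S`, Carathéodory writes `-x` as a nonnegative combination of linearly
independent vectors of `S`. These vectors and `-x` are integral, so the coefficients are rational
and `N • (-x)` is a sum of elements of `S` for some `N ≥ 1`. Then
`-x = N • (-x) + (N - 1) • x` lies in `S ∪ {0}`.
-/

theorem smul_mem_coneHull {m : ℕ} {A : Set (Fin m → ℝ)} {v : Fin m → ℝ} {c : ℝ} (hc : 0 ≤ c)
    (hv : v ∈ coneHull A) : c • v ∈ coneHull A := by
  obtain ⟨s, w, hsA, hw, rfl⟩ := hv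
  refine ⟨s, c • w, hsA, fun a ha => mul_nonneg hc (hw a ha), ?_⟩
  simp only [Finset.smul_sum, Pi.smul_apply, smul_smul, smul_eq_mul]

theorem subset_coneHull {m : ℕ} {A : Set (Fin m → ℝ)} : A ⊆ coneHull A := fun a ha =>
  ⟨{a}, fun _ => 1, by simpa, by simp, by simp⟩

theorem eventually_smul_mem_of_zero_mem_intrinsicInterior {E : Type*} [AddCommGroup E]
    [Module ℝ E] [TopologicalSpace E] [ContinuousSMul ℝ E] {C : Set E}
    (h0 : (0 : E) ∈ intrinsicInterior ℝ C) {a : E} (ha : a ∈ affineSpan ℝ C) :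
    ∀ᶠ t in 𝓝 (0 : ℝ), t • a ∈ C := by
  obtain ⟨y, hy, hy0⟩ := h0
  have h0span : (0 : E) ∈ affineSpan ℝ C := hy0 ▸ y.2
  have hline : ∀ t : ℝ, t • a ∈ affineSpan ℝ C := fun t => by
    simpa [AffineMap.lineMap_apply_module] using AffineMap.lineMap_mem t h0span ha
  let f : ℝ → affineSpan ℝ C := fun t => ⟨t • a, hline t⟩
  have hf : Continuous f := (continuous_id.smul continuous_const).subtype_mk _
  have hf0 : f 0 = y := Subtype.ext (by simp [f, hy0])
  have := hf.continuousAt.preimage_mem_nhds (hf0 ▸ isOpen_interior.mem_nhds hy)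
  filter_upwards [this] with t ht using (interior_subset ht : f t ∈ Subtype.val ⁻¹' C)

theorem neg_mem_coneHull_of_zero_mem_intrinsicInterior {m : ℕ} {A : Set (Fin m → ℝ)}
    (h0 : (0 : Fin m → ℝ) ∈ intrinsicInterior ℝ (coneHull A)) {a : Fin m → ℝ}
    (ha : a ∈ coneHull A) : -a ∈ coneHull A := by
  obtain ⟨t, hC, ht⟩ :=
    ((eventually_smul_mem_of_zero_mem_intrinsicInterior h0 (subset_affineSpan ℝ _ ha)).filter_mono
      nhdsWithin_le_nhds |>.and self_mem_nhdsWithin).exists (f := 𝓝[<] (0 : ℝ))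
  have hneg : -a = (-t)⁻¹ • (t • a) := by
    rw [smul_smul, inv_neg, neg_mul, inv_mul_cancel₀ (ne_of_lt ht), neg_smul, one_smul]
  exact hneg ▸ smul_mem_coneHull (inv_nonneg.2 (neg_nonneg.2 (le_of_lt ht))) hC

theorem exists_nonneg_sum_smul_eq_of_not_linearIndepOn {𝕜 E : Type*} [Field 𝕜] [LinearOrder 𝕜]
    [IsStrictOrderedRing 𝕜] [AddCommGroup E] [Module 𝕜 E] {s : Finset E} {w : E → 𝕜}
    (hw : ∀ a ∈ s, 0 ≤ w a) (hs : ¬LinearIndepOn 𝕜 id (s : Set E)) :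
    ∃ a ∈ s, ∃ w' : E → 𝕜, (∀ b ∈ s, 0 ≤ w' b) ∧ w' a = 0 ∧
      ∑ b ∈ s, w' b • b = ∑ b ∈ s, w b • b := by
  classical
  obtain ⟨g, hg, i, hi, hgi⟩ : ∃ g : E → 𝕜, ∑ b ∈ s, g b • b = 0 ∧ ∃ i ∈ s, 0 < g i := by
    obtain ⟨f, hf, i, hi, hfi⟩ := not_linearIndepOn_finset_iff.1 hs
    rcases hfi.lt_or_gt with hneg | hpos
    · exact ⟨-f, by simpa [neg_smul] using hf, i, hi, by simpa using hneg⟩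
    · exact ⟨f, by simpa using hf, i, hi, hpos⟩
  -- Move along the relation `g` until the first coefficient reaches zero.
  obtain ⟨a, ha, hmin⟩ := Finset.exists_min_image (s.filter (0 < g ·)) (fun b => w b / g b)
    ⟨i, Finset.mem_filter.2 ⟨hi, hgi⟩⟩
  rw [Finset.mem_filter] at ha
  set c := w a / g a
  refine ⟨a, ha.1, fun b => w b - c * g b, fun b hb => ?_, by simp [c, ha.2.ne'], ?_⟩
  · rcases le_or_gt (g b) 0 with hgb | hgb
    · nlinarith [hw b hb, div_nonneg (hw a ha.1) ha.2.le]
    · have := hmin b (Finset.mem_filter.2 ⟨hb, hgb⟩)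
      rw [le_div_iff₀ hgb] at this
      linarith
  · simp only [sub_smul, Finset.sum_sub_distrib, mul_smul, ← Finset.smul_sum, hg, smul_zero,
      sub_zero]

theorem exists_linearIndepOn_of_mem_coneHull {m : ℕ} {A : Set (Fin m → ℝ)} {v : Fin m → ℝ}
    (hv : v ∈ coneHull A) :
    ∃ (t : Finset (Fin m → ℝ)) (w : (Fin m → ℝ) → ℝ), ↑t ⊆ A ∧
      LinearIndepOn ℝ id (t : Set (Fin m → ℝ)) ∧ (∀ a ∈ t, 0 ≤ w a) ∧ v = ∑ a ∈ t, w a • a := by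
  classical
  obtain ⟨s, w, hsA, hw, rfl⟩ := hv
  induction s using Finset.strongInduction generalizing w with
  | H s ih =>
    by_cases hs : LinearIndepOn ℝ id (s : Set (Fin m → ℝ))
    · exact ⟨s, w, hsA, hs, hw, rfl⟩
    obtain ⟨a, ha, w', hw', hw'a, hsum⟩ := exists_nonneg_sum_smul_eq_of_not_linearIndepOn hw hs
    rw [← hsum, ← Finset.sum_erase s (a := a) (by simp [hw'a])]
    exact ih _ (Finset.erase_ssubset ha) w' ((Finset.coe_subset.2 (s.erase_subset a)).trans hsA)
      fun b hb => hw' b (Finset.mem_of_mem_erase hb)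

theorem zc_injective {m : ℕ} : Function.Injective (zc : (Fin m → ℤ) → Fin m → ℝ) :=
  fun _ _ h => funext fun i => Int.cast_injective (congrFun h i)

theorem pi_algebraMap_int_apply {m : ℕ} (x : Fin m → ℤ) : Pi.algebraMap (Fin m) ℤ ℝ x = zc x :=
  rfl

theorem exists_int_eq_mul_of_zc_eq_sum {m : ℕ} {ι : Type*} [Fintype ι] {b : ι → Fin m → ℤ}
    (hb : LinearIndependent ℝ (fun i => zc (b i))) {z : Fin m → ℤ} {w : ι → ℝ}
    (hz : zc z = ∑ i, w i • zc (b i)) : ∃ N : ℤ, N ≠ 0 ∧ ∀ i, ∃ k : ℤ, (k : ℝ) = N * w i := by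
  have hbℤ : LinearIndependent ℤ b := linearIndependent_algebraMap_comp_iff.1 hb
  -- Over `ℝ` the family `z, b` is dependent, hence it is already dependent over `ℤ`.
  have hdep : ¬LinearIndependent ℤ (fun o : Option ι => o.elim z b) := by
    rw [← linearIndependent_algebraMap_comp_iff (S := ℝ)]
    change ¬LinearIndependent ℝ (fun o : Option ι => zc (o.elim z b))
    intro h
    have := Fintype.linearIndependent_iff.1 h (fun o => o.elim (-1) w)
      (by simpa [Fintype.sum_option, neg_add_eq_zero] using hz) none
    norm_num at this
  obtain ⟨c, hc, o, hco⟩ := Fintype.not_linearIndependent_iff.1 hdep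
  simp only [Fintype.sum_option, Option.elim] at hc
  have hc0 : c none ≠ 0 := by
    intro h0
    rw [h0, zero_smul, zero_add] at hc
    cases o with
    | none => exact hco h0
    | some i => exact hco (Fintype.linearIndependent_iff.1 hbℤ _ hc i)
  refine ⟨c none, hc0, fun i => ⟨-c (some i), ?_⟩⟩
  have hR : ∑ i, ((c none : ℝ) * w i + c (some i)) • zc (b i) = 0 := by
    have := congrArg (Pi.algebraMap (Fin m) ℤ ℝ) hc
    simp only [map_add, map_sum, map_zsmul, map_zero, pi_algebraMap_int_apply, hz,
      Finset.smul_sum, ← Int.cast_smul_eq_zsmul ℝ, smul_smul] at this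
    simpa [add_smul, Finset.sum_add_distrib] using this
  have := Fintype.linearIndependent_iff.1 hb _ hR i
  push_cast
  linarith

theorem AddSubmonoid.closure_subset_insert_zero {M : Type*} [AddMonoid M] {S : Set M}
    (hS : ∀ x ∈ S, ∀ y ∈ S, x + y ∈ S) : (closure S : Set M) ⊆ insert 0 S := by
  intro x hx
  induction hx using closure_induction with
  | mem x hx => exact Or.inr hx
  | zero => exact Or.inl rfl
  | add x y _ _ hx hy =>
    rcases hx with rfl | hx
    · simpa using hy
    rcases hy with rfl | hy
    · simpa using Or.inr hx
    · exact Or.inr (hS x hx y hy)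

theorem exists_pos_nsmul_mem_closure_of_zc_mem_coneHull {m : ℕ} {S : Set (Fin m → ℤ)}
    {z : Fin m → ℤ} (hz : zc z ∈ coneHull (zc '' S)) :
    ∃ N : ℕ, 0 < N ∧ N • z ∈ AddSubmonoid.closure S := by
  obtain ⟨t, w, htS, ht, hw, hz⟩ := exists_linearIndepOn_of_mem_coneHull hz
  choose b hbS hb using fun a : t => htS a.2
  have hbt : LinearIndependent ℝ (fun a : t => zc (b a)) := by
    simp only [hb]; exact ht.linearIndependent
  have hzb : zc z = ∑ a : t, w a • zc (b a) := by
    simp only [hb, hz]; exact (Finset.sum_coe_sort t _).symm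
  obtain ⟨N, hN, hk⟩ := exists_int_eq_mul_of_zc_eq_sum hbt hzb
  choose k hk using hk
  have hNz : N.natAbs • z = ∑ a : t, (k a).natAbs • b a := by
    refine zc_injective ?_
    simp only [← pi_algebraMap_int_apply, map_nsmul, map_sum]
    simp only [pi_algebraMap_int_apply, hzb, Finset.smul_sum, ← Nat.cast_smul_eq_nsmul ℝ,
      smul_smul, Nat.cast_natAbs, Int.cast_abs, hk, abs_mul, abs_of_nonneg (hw _ (Subtype.prop _))]
  exact ⟨N.natAbs, Int.natAbs_pos.2 hN,
    hNz ▸ sum_mem fun a _ => nsmul_mem (AddSubmonoid.subset_closure (hbS a)) _⟩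

theorem stmt8_general {m : ℕ} (S : Set (Fin m → ℤ))
    (hSadd : ∀ x ∈ S, ∀ y ∈ S, x + y ∈ S)
    (h0 : (0 : Fin m → ℝ) ∈ intrinsicInterior ℝ (coneHull (zc '' S))) :
    ∀ x ∈ S, -x ∈ S := by
  intro x hx
  have hneg : zc (-x) ∈ coneHull (zc '' S) := by
    simpa [← pi_algebraMap_int_apply] using
      neg_mem_coneHull_of_zero_mem_intrinsicInterior h0 (subset_coneHull ⟨x, hx, rfl⟩)
  obtain ⟨N, hN, hNx⟩ := exists_pos_nsmul_mem_closure_of_zc_mem_coneHull hneg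
  obtain ⟨n, rfl⟩ := Nat.exists_eq_add_of_lt hN
  have hmem : -x ∈ AddSubmonoid.closure S := by
    have := add_mem hNx (nsmul_mem (AddSubmonoid.subset_closure hx) n)
    rwa [zero_add, succ_nsmul, neg_nsmul, neg_add_cancel_comm] at this
  rcases AddSubmonoid.closure_subset_insert_zero hSadd hmem with h | h
  · obtain rfl := neg_eq_zero.1 h
    simpa using hx
  · exact h

/-- if `0` lies in the asymptotic cone `O = rint(cone(S))` of a vector
semigroup `S`, then `S` is a group. -/
theorem stmt8 {m : ℕ} (S : Set (Fin m → ℤ)) (hSne : S.Nonempty)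
    (hSadd : ∀ x ∈ S, ∀ y ∈ S, x + y ∈ S)
    (h0 : (0 : Fin m → ℝ) ∈ intrinsicInterior ℝ (coneHull (zc '' S))) :
    ∀ x ∈ S, -x ∈ S :=
  stmt8_general S hSadd h0
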